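/- Define H₁(x,y,u,v) = (2/3)·f(y³(u²+v²)) and the vector field X₁(x,y,u,v) = (0, 0, −v, u) on {y > 0}. Then: (i) X₁ is the infinitesimal generator of the circle action, i.e. d/dθ|_{θ=0} (z, e^{iθ}w) = (0, iw) corresponds to (0,0,−v,u); and (ii) X₁ is the Hamiltonian vector field of H₁ with respect to ω_f: for every point with y > 0 and every index j ∈ {1,2,3,4}, Σ_i (X₁)_i·(Ω_f)_{ij} = ∂_j H₁. -/

import Mathlib

open Matrix

/-- The coefficient matrix `Ω_f(x,y,u,v)` of the 2-form `ω_f` on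
`ℍ²×ℂ ≅ {(x,y,u,v) : y > 0}`, where `f, f′` are evaluated at `t = y³(u²+v²)`. -/
noncomputable def Omf (f : ℝ → ℝ) (x y u v : ℝ) : Matrix (Fin 4) (Fin 4) ℝ :=
  let F := f (y ^ 3 * (u ^ 2 + v ^ 2))
  let F' := deriv f (y ^ 3 * (u ^ 2 + v ^ 2))
  !![0, (-1 + F - 3 * F' * y ^ 3 * (u ^ 2 + v ^ 2)) / y ^ 2, -2 * y ^ 2 * F' * u,
       -2 * y ^ 2 * F' * v;
     -((-1 + F - 3 * F' * y ^ 3 * (u ^ 2 + v ^ 2)) / y ^ 2), 0, 2 * y ^ 2 * F' * v,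
       -2 * y ^ 2 * F' * u;
     -(-2 * y ^ 2 * F' * u), -(2 * y ^ 2 * F' * v), 0, -(4 / 3) * F' * y ^ 3;
     -(-2 * y ^ 2 * F' * v), -(-2 * y ^ 2 * F' * u), -(-(4 / 3) * F' * y ^ 3), 0]


/-- The partial derivative `∂_k g` of a function `g` of `(x,y,u,v)`, with
`∂₁ = ∂/∂x`, `∂₂ = ∂/∂y`, `∂₃ = ∂/∂u`, `∂₄ = ∂/∂v`. -/
noncomputable def pd (k : Fin 4) (g : ℝ → ℝ → ℝ → ℝ → ℝ) (x y u v : ℝ) : ℝ :=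
  ![deriv (fun s => g s y u v) x,
    deriv (fun s => g x s u v) y,
    deriv (fun s => g x y s v) u,
    deriv (fun s => g x y u s) v] k


/-- The Hamiltonian function of the circle action: `H₁ = (2/3)·f(y³(u²+v²))`. -/
noncomputable def H1 (f : ℝ → ℝ) (x y u v : ℝ) : ℝ :=
  (2 / 3) * f (y ^ 3 * (u ^ 2 + v ^ 2))

/-- The Hamiltonian function of the diagonal `ℝ*`-action:
`H₂ = 2(x/y)(1 − f(y³(u²+v²)))`. -/
noncomputable def H2 (f : ℝ → ℝ) (x y u v : ℝ) : ℝ :=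
  2 * (x / y) * (1 - f (y ^ 3 * (u ^ 2 + v ^ 2)))


theorem stmt8 (f : ℝ → ℝ) (hf : ContDiff ℝ (⊤ : ℕ∞) f) :
    -- (i) the infinitesimal generator of the circle action is `(0, iw)`,
    -- which corresponds to `(0,0,−v,u)`:
    (∀ z w : ℂ,
      deriv (fun θ : ℝ => ((z, Complex.exp (θ * Complex.I) * w) : ℂ × ℂ)) 0 =
        (0, Complex.I * w) ∧
      ![(0 : ℂ).re, (0 : ℂ).im, (Complex.I * w).re, (Complex.I * w).im] =
        ![0, 0, -w.im, w.re]) ∧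
    -- (ii) `X₁ = (0,0,−v,u)` is the Hamiltonian vector field of `H₁` w.r.t. `ω_f`:
    (∀ x y u v : ℝ, 0 < y → ∀ j : Fin 4,
      Matrix.vecMul ![0, 0, -v, u] (Omf f x y u v) j = pd j (H1 f) x y u v) := by
  have hfd : ∀ t : ℝ, HasDerivAt f (deriv f t) t := fun t =>
    ((hf.differentiable (by simp)) t).hasDerivAt
  constructor
  · intro z w
    constructor
    · have h0 : HasDerivAt (fun θ : ℝ => (θ : ℂ)) 1 0 := by
        simpa using (hasDerivAt_id (0 : ℝ)).ofReal_comp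
      have h1 : HasDerivAt (fun θ : ℝ => (θ : ℂ) * Complex.I) Complex.I 0 := by
        simpa using h0.mul_const Complex.I
      have h2 : HasDerivAt (fun θ : ℝ => Complex.exp ((θ : ℂ) * Complex.I))
          (Complex.I • Complex.exp ((0 : ℝ) * Complex.I)) 0 :=
        (Complex.hasDerivAt_exp ((0 : ℝ) * Complex.I)).scomp 0 h1
      have h3 := ((hasDerivAt_const (0 : ℝ) z).prodMk (h2.mul_const w))
      rw [h3.deriv]
      simp
    · funext i
      fin_cases i <;> simp [Complex.mul_re, Complex.mul_im]
  · intro x y u v hy j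
    have hg : ∀ (A : ℝ) (s : ℝ), HasDerivAt (fun s : ℝ => s ^ 3 * A) (3 * s ^ 2 * A) s := by
      intro A s
      simpa using (hasDerivAt_pow 3 s).mul_const A
    have hu : ∀ (B s : ℝ), HasDerivAt (fun s : ℝ => B * (s ^ 2 + v ^ 2)) (B * (2 * s)) s := by
      intro B s
      simpa using (((hasDerivAt_pow 2 s).add_const (v ^ 2)).const_mul B)
    have hv : ∀ (B s : ℝ), HasDerivAt (fun s : ℝ => B * (u ^ 2 + s ^ 2)) (B * (2 * s)) s := by
      intro B s
      simpa using (((hasDerivAt_pow 2 s).const_add (u ^ 2)).const_mul B)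
    set F' := deriv f (y ^ 3 * (u ^ 2 + v ^ 2)) with hF'
    have dx : pd 0 (H1 f) x y u v = 0 := by
      simp [pd, H1]
    have dy : pd 1 (H1 f) x y u v = 2 / 3 * (F' * (3 * y ^ 2 * (u ^ 2 + v ^ 2))) := by
      have : HasDerivAt (fun s : ℝ => (2 / 3) * f (s ^ 3 * (u ^ 2 + v ^ 2)))
          ((2 / 3) * (F' * (3 * y ^ 2 * (u ^ 2 + v ^ 2)))) y :=
        (((hfd _).comp y (hg (u ^ 2 + v ^ 2) y))).const_mul (2 / 3)
      simpa [pd, H1] using this.deriv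
    have du : pd 2 (H1 f) x y u v = 2 / 3 * (F' * (y ^ 3 * (2 * u))) := by
      have : HasDerivAt (fun s : ℝ => (2 / 3) * f (y ^ 3 * (s ^ 2 + v ^ 2)))
          ((2 / 3) * (F' * (y ^ 3 * (2 * u)))) u :=
        (((hfd _).comp u (hu (y ^ 3) u))).const_mul (2 / 3)
      simpa [pd, H1] using this.deriv
    have dv : pd 3 (H1 f) x y u v = 2 / 3 * (F' * (y ^ 3 * (2 * v))) := by
      have : HasDerivAt (fun s : ℝ => (2 / 3) * f (y ^ 3 * (u ^ 2 + s ^ 2)))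
          ((2 / 3) * (F' * (y ^ 3 * (2 * v)))) v :=
        (((hfd _).comp v (hv (y ^ 3) v))).const_mul (2 / 3)
      simpa [pd, H1] using this.deriv
    fin_cases j
    · show _ = pd 0 (H1 f) x y u v
      rw [dx]
      simp [Omf, Matrix.vecMul, dotProduct, Fin.sum_univ_four]
      ring
    · show _ = pd 1 (H1 f) x y u v
      rw [dy]
      simp [Omf, Matrix.vecMul, dotProduct, Fin.sum_univ_four, ← hF']
      ring
    · show _ = pd 2 (H1 f) x y u v
      rw [du]
      simp [Omf, Matrix.vecMul, dotProduct, Fin.sum_univ_four, ← hF']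
      ring
    · show _ = pd 3 (H1 f) x y u v
      rw [dv]
      simp [Omf, Matrix.vecMul, dotProduct, Fin.sum_univ_four, ← hF']
      ring
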